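/- Let n ≥ 1, M ≥ 2 and let u : Q_1 → ℝ be continuous such that for every fixed t the map x ↦ u(x,t) is differentiable with ∂_{x_n} u ≥ 1 − 1/M everywhere on Q_1, and u(0,0) = 0. Then there exist δ > 0 and a unique function v defined on D := {(x', z, t) ∈ ℝ^{n−1} × ℝ × ℝ : |x'| + |z| + |t|^{1/2} < δ} such that for every (x', z, t) ∈ D one has ((x', v(x',z,t)), t) ∈ Q_1 and u((x', v(x',z,t)), t) = z; moreover v is continuous on D. -/

import Mathlib

open MeasureTheory Metric Set Filter

noncomputable section

abbrev Spc (n : ℕ) := EuclideanSpace ℝ (Fin n)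

/-- Parabolic cylinder `Q_r(x,t)`. -/
def Qcyl (n : ℕ) (r : ℝ) (x : Spc n) (t : ℝ) : Set (Spc n × ℝ) :=
  {p : Spc n × ℝ | ‖p.1 - x‖ + Real.sqrt |p.2 - t| < r}

/-- Time derivative `∂ₜ u`. -/
def timeDeriv {n : ℕ} (u : Spc n × ℝ → ℝ) (p : Spc n × ℝ) : ℝ :=
  deriv (fun s => u (p.1, s)) p.2

/-- Spatial gradient `∇u`. -/
def spGrad {n : ℕ} (u : Spc n × ℝ → ℝ) (p : Spc n × ℝ) : Spc n :=
  gradient (fun y => u (y, p.2)) p.1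

/-- The point `p` translated by `h` in the `i`-th spatial direction. -/
def dirPoint {n : ℕ} (p : Spc n × ℝ) (i : Fin n) (h : ℝ) : Spc n × ℝ :=
  (p.1 + h • EuclideanSpace.single i (1 : ℝ), p.2)

/-- Second spatial partial `∂ᵢⱼ u`, as derivative of the `i`-th component of
the spatial gradient in direction `j`. -/
def secondPartial {n : ℕ} (u : Spc n × ℝ → ℝ) (i j : Fin n) (p : Spc n × ℝ) : ℝ :=
  deriv (fun h : ℝ => spGrad u (dirPoint p j h) i) 0

/-- Spatial Laplacian `Δu`. -/
def lapl {n : ℕ} (u : Spc n × ℝ → ℝ) (p : Spc n × ℝ) : ℝ :=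
  ∑ i, secondPartial u i i p

/-- `u` is a strong solution of `∂ₜ u - Δu = g · χ_{u>0}` on `U`:
continuous with continuous spatial gradient, and a.e. on `U` the time derivative and
the pure second spatial partials exist and the equation holds. -/
def IsStrongSolution {n : ℕ} (u : Spc n × ℝ → ℝ) (g : ℝ) (U : Set (Spc n × ℝ)) : Prop :=
  ContinuousOn u U ∧
  (∀ p ∈ U, HasGradientAt (fun y => u (y, p.2)) (spGrad u p) p.1) ∧
  ContinuousOn (fun p => spGrad u p) U ∧
  (∀ᵐ p ∂(volume.restrict U),
    HasDerivAt (fun s => u (p.1, s)) (timeDeriv u p) p.2 ∧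
    (∀ i : Fin n, HasDerivAt (fun h : ℝ => spGrad u (dirPoint p i h) i) (secondPartial u i i p) 0) ∧
    timeDeriv u p - lapl u p = (if 0 < u p then g else 0))

/-- The free boundary `Γ = ∂{u>0}` relative to the open set `U`. -/
def freeBdry {n : ℕ} (u : Spc n × ℝ → ℝ) (U : Set (Spc n × ℝ)) : Set (Spc n × ℝ) :=
  U ∩ frontier {p : Spc n × ℝ | 0 < u p}

/-- Assemble a point of `ℝⁿ` from `x' ∈ ℝ^{n-1}` (the first `n-1` coordinates) and a last
coordinate `z`. -/
def assemble (n : ℕ) (x' : EuclideanSpace ℝ (Fin (n - 1))) (z : ℝ) : Spc n :=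
  (WithLp.equiv 2 (∀ _ : Fin n, ℝ)).symm
    (fun i => if h : (i : ℕ) < n - 1 then x' ⟨(i : ℕ), h⟩ else z)

/-! Along the line `s ↦ (x', s)` the derivative of `u(·, t)` is `∂ₙu ≥ 1 - 1/M ≥ 1/2`, so on the
(convex) part of the line inside `Q₁` the slice `s ↦ u((x', s), t)` is strictly increasing and
grows at rate at least `1/2`. Near the origin both `u((x', 0), t)` and `z` are small, so the slice
lies below `z` at `s = -1/2` and above it at `s = 1/2`: the intermediate value theorem gives
`v(x', z, t)`, strict monotonicity makes it unique. Continuity is the stability of strict sign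
conditions: if the slice minus `z` is negative at `v - η` and positive at `v + η` for one
parameter, it stays so for nearby parameters, which traps their zeros in `(v - η, v + η)`. -/

open Topology

section MonotoneFamily

variable {X : Type*} [TopologicalSpace X] {F : X → ℝ → ℝ} {D : Set X} {a b : ℝ} {v : X → ℝ}

theorem eventually_lt_of_strictMonoOn_zero (hmono : ∀ x ∈ D, StrictMonoOn (F x) (Ioo a b))
    (hv : ∀ x ∈ D, v x ∈ Ioo a b ∧ F x (v x) = 0) {x : X} {c : ℝ} (hc : c ∈ Ioo a b)
    (hcont : ContinuousAt (F · c) x) (hFc : F x c < 0) : ∀ᶠ y in 𝓝[D] x, c < v y := by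
  filter_upwards [self_mem_nhdsWithin, nhdsWithin_le_nhds (hcont.eventually (gt_mem_nhds hFc))]
    with y hy hFy
  exact ((hmono y hy).lt_iff_lt hc (hv y hy).1).1 ((hv y hy).2 ▸ hFy)

theorem eventually_gt_of_strictMonoOn_zero (hmono : ∀ x ∈ D, StrictMonoOn (F x) (Ioo a b))
    (hv : ∀ x ∈ D, v x ∈ Ioo a b ∧ F x (v x) = 0) {x : X} {c : ℝ} (hc : c ∈ Ioo a b)
    (hcont : ContinuousAt (F · c) x) (hFc : 0 < F x c) : ∀ᶠ y in 𝓝[D] x, v y < c := by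
  filter_upwards [self_mem_nhdsWithin, nhdsWithin_le_nhds (hcont.eventually (lt_mem_nhds hFc))]
    with y hy hFy
  exact ((hmono y hy).lt_iff_lt (hv y hy).1 hc).1 ((hv y hy).2 ▸ hFy)

theorem continuousOn_of_strictMonoOn_zero (hmono : ∀ x ∈ D, StrictMonoOn (F x) (Ioo a b))
    (hv : ∀ x ∈ D, v x ∈ Ioo a b ∧ F x (v x) = 0)
    (hcont : ∀ x ∈ D, ∀ s ∈ Ioo a b, ContinuousAt (F · s) x) : ContinuousOn v D := by
  intro x hx
  obtain ⟨⟨hav, hvb⟩, hFv⟩ := hv x hx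
  refine tendsto_order.2 ⟨fun c hc => ?_, fun c hc => ?_⟩
  · have hc' : max c ((a + v x) / 2) ∈ Ioo a b :=
      ⟨lt_max_of_lt_right (by linarith), max_lt (hc.trans hvb) (by linarith)⟩
    have hFc : F x (max c ((a + v x) / 2)) < 0 :=
      hFv ▸ hmono x hx hc' ⟨hav, hvb⟩ (max_lt hc (by linarith))
    filter_upwards [eventually_lt_of_strictMonoOn_zero hmono hv hc' (hcont x hx _ hc') hFc]
      with y hy using (le_max_left _ _).trans_lt hy
  · have hc' : min c ((v x + b) / 2) ∈ Ioo a b :=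
      ⟨lt_min (hav.trans hc) (by linarith), min_lt_of_right_lt (by linarith)⟩
    have hFc : 0 < F x (min c ((v x + b) / 2)) :=
      hFv ▸ hmono x hx ⟨hav, hvb⟩ hc' (lt_min hc (by linarith))
    filter_upwards [eventually_gt_of_strictMonoOn_zero hmono hv hc' (hcont x hx _ hc') hFc]
      with y hy using hy.trans_le (min_le_left _ _)

theorem exists_continuousOn_zero_of_strictMonoOn (hab : a ≤ b)
    (hcont : ∀ x ∈ D, ContinuousOn (F x) (Icc a b))
    (hmono : ∀ x ∈ D, StrictMonoOn (F x) (Icc a b))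
    (hneg : ∀ x ∈ D, F x a < 0) (hpos : ∀ x ∈ D, 0 < F x b)
    (hcontX : ∀ x ∈ D, ∀ s ∈ Ioo a b, ContinuousAt (F · s) x) :
    ∃ v : X → ℝ, (∀ x ∈ D, v x ∈ Ioo a b ∧ F x (v x) = 0) ∧ ContinuousOn v D := by
  have hzero : ∀ x ∈ D, ∃ s ∈ Ioo a b, F x s = 0 := fun x hx =>
    intermediate_value_Ioo hab (hcont x hx) ⟨hneg x hx, hpos x hx⟩
  choose! v hv hFv using hzero
  have hv' : ∀ x ∈ D, v x ∈ Ioo a b ∧ F x (v x) = 0 := fun x hx => ⟨hv x hx, hFv x hx⟩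
  exact ⟨v, hv', continuousOn_of_strictMonoOn_zero
    (fun x hx => (hmono x hx).mono Ioo_subset_Icc_self) hv' hcontX⟩

end MonotoneFamily

theorem HasGradientAt.hasDerivAt_comp_add_smul {E : Type*} [NormedAddCommGroup E]
    [InnerProductSpace ℝ E] [CompleteSpace E] {f : E → ℝ} {g x e : E} {s : ℝ}
    (h : HasGradientAt f g (x + s • e)) :
    HasDerivAt (fun r : ℝ => f (x + r • e)) (inner ℝ g e) s := by
  have := h.hasFDerivAt.comp_hasDerivAt s (((hasDerivAt_id s).smul_const e).const_add x)
  rwa [InnerProductSpace.toDual_apply_apply, one_smul] at this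

theorem lt_and_lt_of_mul_sub_le {f : ℝ → ℝ} {a κ z : ℝ} (ha : 0 ≤ a)
    (hf : ∀ x ∈ Icc (-a) a, ∀ y ∈ Icc (-a) a, x ≤ y → κ * (y - x) ≤ f y - f x)
    (hz : |f 0 - z| < κ * a) : f (-a) < z ∧ z < f a := by
  have h₀ : (0 : ℝ) ∈ Icc (-a) a := ⟨by linarith, ha⟩
  have hl := hf (-a) ⟨le_rfl, by linarith⟩ 0 h₀ (by linarith)
  have hr := hf 0 h₀ a ⟨by linarith, le_rfl⟩ ha
  constructor <;> linarith [abs_lt.1 hz]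

theorem isOpen_Qcyl (n : ℕ) (r : ℝ) (x : Spc n) (t : ℝ) : IsOpen (Qcyl n r x t) :=
  isOpen_lt (by fun_prop) continuous_const

theorem mem_Qcyl_zero_iff {n : ℕ} {r : ℝ} {y : Spc n} {t : ℝ} :
    (y, t) ∈ Qcyl n r 0 0 ↔ ‖y‖ + Real.sqrt |t| < r := by
  simp [Qcyl]

section Assemble

variable {m : ℕ}

theorem assemble_succ_apply (x' : EuclideanSpace ℝ (Fin m)) (z : ℝ) (i : Fin (m + 1)) :
    assemble (m + 1) x' z i = if h : (i : ℕ) < m then x' ⟨i, h⟩ else z :=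
  rfl

theorem assemble_eq_add_smul_single (x' : EuclideanSpace ℝ (Fin m)) (z : ℝ) :
    assemble (m + 1) x' z = assemble (m + 1) x' 0 + z • EuclideanSpace.single (Fin.last m) 1 := by
  ext i
  rcases Fin.eq_castSucc_or_eq_last i with ⟨j, rfl⟩ | rfl
  · simp [assemble_succ_apply, (Fin.castSucc_lt_last j).ne]
  · simp [assemble_succ_apply]

theorem norm_assemble_le (x' : EuclideanSpace ℝ (Fin m)) (z : ℝ) :
    ‖assemble (m + 1) x' z‖ ≤ ‖x'‖ + |z| := by
  have h0 : ‖assemble (m + 1) x' 0‖ = ‖x'‖ := by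
    simp [EuclideanSpace.norm_eq, Fin.sum_univ_castSucc, assemble_succ_apply]
  calc ‖assemble (m + 1) x' z‖
      ≤ ‖assemble (m + 1) x' 0‖ + ‖z • EuclideanSpace.single (Fin.last m) (1 : ℝ)‖ := by
        rw [assemble_eq_add_smul_single]; exact norm_add_le _ _
    _ = ‖x'‖ + |z| := by simp [h0, norm_smul]

theorem continuous_assemble :
    Continuous fun q : EuclideanSpace ℝ (Fin m) × ℝ => assemble (m + 1) q.1 q.2 := by
  refine (PiLp.continuous_toLp 2 _).comp (continuous_pi fun i => ?_)
  by_cases h : (i : ℕ) < m <;> simp only [Nat.add_sub_cancel, h, ↓reduceDIte] <;> fun_prop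

end Assemble

section Slice

variable {m : ℕ} {x' : EuclideanSpace ℝ (Fin m)} {t r : ℝ}

theorem HasGradientAt.hasDerivAt_comp_assemble {f : Spc (m + 1) → ℝ} {g : Spc (m + 1)} {s : ℝ}
    (h : HasGradientAt f g (assemble (m + 1) x' s)) :
    HasDerivAt (fun z => f (assemble (m + 1) x' z)) (g (Fin.last m)) s := by
  rw [assemble_eq_add_smul_single x' s] at h
  have hline : (fun z => f (assemble (m + 1) x' z))
      = fun z => f (assemble (m + 1) x' 0 + z • EuclideanSpace.single (Fin.last m) 1) :=
    funext fun z => by rw [assemble_eq_add_smul_single x' z]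
  simpa [hline, EuclideanSpace.inner_single_right] using h.hasDerivAt_comp_add_smul

theorem convex_setOf_assemble_mem_Qcyl :
    Convex ℝ {s | (assemble (m + 1) x' s, t) ∈ Qcyl (m + 1) r 0 0} := by
  have hline : {s | (assemble (m + 1) x' s, t) ∈ Qcyl (m + 1) r 0 0} =
      AffineMap.lineMap (assemble (m + 1) x' 0) (assemble (m + 1) x' 1) ⁻¹'
        ball 0 (r - Real.sqrt |t|) := by
    ext s
    rw [mem_preimage, mem_ball_zero_iff, AffineMap.lineMap_apply_module',
      assemble_eq_add_smul_single x' 1, add_sub_cancel_left, one_smul,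
      add_comm _ (assemble (m + 1) x' 0), ← assemble_eq_add_smul_single x' s, lt_sub_iff_add_lt]
    exact mem_Qcyl_zero_iff
  exact hline ▸ (convex_ball _ _).affine_preimage _

theorem Icc_subset_setOf_assemble_mem_Qcyl {a : ℝ} (h : ‖x'‖ + a + Real.sqrt |t| < r) :
    Icc (-a) a ⊆ {s | (assemble (m + 1) x' s, t) ∈ Qcyl (m + 1) r 0 0} := fun s hs => by
  have := norm_assemble_le x' s
  exact mem_Qcyl_zero_iff.2 (by linarith [abs_le.2 hs])

end Slice

section SliceMonotone

variable {m : ℕ} {u : Spc (m + 1) × ℝ → ℝ} {r κ : ℝ}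

theorem mul_sub_le_slice_sub
    (hdiff : ∀ p ∈ Qcyl (m + 1) r 0 0, HasGradientAt (fun y => u (y, p.2)) (spGrad u p) p.1)
    (hκ : ∀ p ∈ Qcyl (m + 1) r 0 0, κ ≤ spGrad u p (Fin.last m))
    (x' : EuclideanSpace ℝ (Fin m)) (t : ℝ) :
    ∀ s₁ ∈ {s | (assemble (m + 1) x' s, t) ∈ Qcyl (m + 1) r 0 0},
    ∀ s₂ ∈ {s | (assemble (m + 1) x' s, t) ∈ Qcyl (m + 1) r 0 0}, s₁ ≤ s₂ →
      κ * (s₂ - s₁) ≤ u (assemble (m + 1) x' s₂, t) - u (assemble (m + 1) x' s₁, t) := by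
  have hderiv : ∀ s ∈ {s | (assemble (m + 1) x' s, t) ∈ Qcyl (m + 1) r 0 0},
      HasDerivAt (fun z => u (assemble (m + 1) x' z, t))
        (spGrad u (assemble (m + 1) x' s, t) (Fin.last m)) s := fun s hs =>
    (hdiff _ hs).hasDerivAt_comp_assemble
  refine convex_setOf_assemble_mem_Qcyl.mul_sub_le_image_sub_of_le_deriv
    (fun s hs => (hderiv s hs).continuousAt.continuousWithinAt)
    (fun s hs => (hderiv s (interior_subset hs)).differentiableAt.differentiableWithinAt)
    fun s hs => ?_
  have hs' := interior_subset hs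
  exact (hderiv s hs').deriv ▸ hκ _ hs'

theorem strictMonoOn_slice
    (hdiff : ∀ p ∈ Qcyl (m + 1) r 0 0, HasGradientAt (fun y => u (y, p.2)) (spGrad u p) p.1)
    (hκ : ∀ p ∈ Qcyl (m + 1) r 0 0, κ ≤ spGrad u p (Fin.last m)) (hκ₀ : 0 < κ)
    (x' : EuclideanSpace ℝ (Fin m)) (t : ℝ) :
    StrictMonoOn (fun s => u (assemble (m + 1) x' s, t))
      {s | (assemble (m + 1) x' s, t) ∈ Qcyl (m + 1) r 0 0} := fun s₁ hs₁ s₂ hs₂ hlt => by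
  have := mul_sub_le_slice_sub hdiff hκ x' t s₁ hs₁ s₂ hs₂ hlt.le
  nlinarith

theorem ContinuousOn.continuousAt_comp_assemble (hcont : ContinuousOn u (Qcyl (m + 1) r 0 0))
    {q : EuclideanSpace ℝ (Fin m) × ℝ × ℝ} {s : ℝ}
    (hq : (assemble (m + 1) q.1 s, q.2.2) ∈ Qcyl (m + 1) r 0 0) :
    ContinuousAt (fun q : EuclideanSpace ℝ (Fin m) × ℝ × ℝ => u (assemble (m + 1) q.1 s, q.2.2))
      q :=
  (hcont.continuousAt ((isOpen_Qcyl _ _ _ _).mem_nhds hq)).comp (x := q)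
    (f := fun q : EuclideanSpace ℝ (Fin m) × ℝ × ℝ => (assemble (m + 1) q.1 s, q.2.2))
    ((continuous_assemble.comp (continuous_fst.prodMk continuous_const)).prodMk
      continuous_snd.snd).continuousAt

end SliceMonotone

section Hodograph

variable {m : ℕ} {u : Spc (m + 1) × ℝ → ℝ}

theorem exists_pos_abs_lt_of_continuousAt (hu : ContinuousAt u (0, 0)) (h0 : u (0, 0) = 0)
    {ε : ℝ} (hε : 0 < ε) :
    ∃ δ > 0, ∀ q : EuclideanSpace ℝ (Fin m) × ℝ × ℝ,
      ‖q.1‖ + |q.2.1| + Real.sqrt |q.2.2| < δ → |u (assemble (m + 1) q.1 0, q.2.2)| < ε := by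
  obtain ⟨ρ, hρ, hball⟩ := Metric.continuousAt_iff.1 hu ε hε
  refine ⟨min ρ 1, lt_min hρ one_pos, fun q hq => ?_⟩
  have hx : ‖assemble (m + 1) q.1 0‖ ≤ ‖q.1‖ := by simpa using norm_assemble_le q.1 0
  have hρ₁ := min_le_left ρ 1
  have hsqrt : Real.sqrt |q.2.2| < 1 := by
    linarith [min_le_right ρ 1, norm_nonneg q.1, abs_nonneg q.2.1]
  have ht : |q.2.2| ≤ Real.sqrt |q.2.2| := by
    nlinarith [Real.sq_sqrt (abs_nonneg q.2.2), Real.sqrt_nonneg |q.2.2|]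
  have hdist : dist (assemble (m + 1) q.1 0, q.2.2) ((0 : Spc (m + 1)), (0 : ℝ)) < ρ := by
    rw [Prod.dist_eq, dist_zero_right, Real.dist_0_eq_abs]
    exact max_lt (by linarith [abs_nonneg q.2.1, Real.sqrt_nonneg |q.2.2|])
      (by linarith [abs_nonneg q.2.1, norm_nonneg q.1])
  simpa [h0] using hball hdist

theorem exists_continuousOn_hodograph (hcont : ContinuousOn u (Qcyl (m + 1) 1 0 0))
    (hdiff : ∀ p ∈ Qcyl (m + 1) 1 0 0, HasGradientAt (fun y => u (y, p.2)) (spGrad u p) p.1)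
    (hκ : ∀ p ∈ Qcyl (m + 1) 1 0 0, 1 / 2 ≤ spGrad u p (Fin.last m)) (h0 : u (0, 0) = 0) :
    ∃ δ > 0, ∃ v : EuclideanSpace ℝ (Fin m) × ℝ × ℝ → ℝ,
      (∀ q : EuclideanSpace ℝ (Fin m) × ℝ × ℝ, ‖q.1‖ + |q.2.1| + Real.sqrt |q.2.2| < δ →
        (assemble (m + 1) q.1 (v q), q.2.2) ∈ Qcyl (m + 1) 1 0 0 ∧
        u (assemble (m + 1) q.1 (v q), q.2.2) = q.2.1) ∧
      ContinuousOn v {q | ‖q.1‖ + |q.2.1| + Real.sqrt |q.2.2| < δ} := by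
  obtain ⟨δ, hδ, hsmall⟩ := exists_pos_abs_lt_of_continuousAt
    (hcont.continuousAt ((isOpen_Qcyl _ _ _ _).mem_nhds (mem_Qcyl_zero_iff.2 (by simp)))) h0
    (by norm_num : (0 : ℝ) < 1 / 8)
  set D := {q : EuclideanSpace ℝ (Fin m) × ℝ × ℝ |
    ‖q.1‖ + |q.2.1| + Real.sqrt |q.2.2| < min δ (1 / 8)}
  have hD : ∀ q ∈ D,
      Icc (-(1 / 2)) (1 / 2) ⊆ {s | (assemble (m + 1) q.1 s, q.2.2) ∈ Qcyl (m + 1) 1 0 0} ∧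
      u (assemble (m + 1) q.1 (-(1 / 2)), q.2.2) < q.2.1 ∧
      q.2.1 < u (assemble (m + 1) q.1 (1 / 2), q.2.2) := by
    intro q hq
    have hδq : ‖q.1‖ + |q.2.1| + Real.sqrt |q.2.2| < δ := hq.trans_le (min_le_left _ _)
    have h8 : ‖q.1‖ + |q.2.1| + Real.sqrt |q.2.2| < 1 / 8 := hq.trans_le (min_le_right _ _)
    have hIcc : Icc (-(1 / 2)) (1 / 2) ⊆
        {s | (assemble (m + 1) q.1 s, q.2.2) ∈ Qcyl (m + 1) 1 0 0} :=
      Icc_subset_setOf_assemble_mem_Qcyl (by linarith [abs_nonneg q.2.1])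
    refine ⟨hIcc, lt_and_lt_of_mul_sub_le (by norm_num)
      (fun x hx y hy => mul_sub_le_slice_sub hdiff hκ q.1 q.2.2 x (hIcc hx) y (hIcc hy)) ?_⟩
    have := abs_sub (u (assemble (m + 1) q.1 0, q.2.2)) q.2.1
    linarith [hsmall q hδq, norm_nonneg q.1, Real.sqrt_nonneg |q.2.2|]
  have hslice : ∀ q ∈ D, ∀ s ∈ Icc (-(1 / 2) : ℝ) (1 / 2),
      (assemble (m + 1) q.1 s, q.2.2) ∈ Qcyl (m + 1) 1 0 0 := fun q hq s hs => (hD q hq).1 hs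
  obtain ⟨v, hv, hvc⟩ := exists_continuousOn_zero_of_strictMonoOn (D := D) (a := -(1 / 2))
    (b := 1 / 2) (F := fun q s => u (assemble (m + 1) q.1 s, q.2.2) - q.2.1) (by norm_num)
    (fun q hq s hs => ((hdiff _ (hslice q hq s hs)).hasDerivAt_comp_assemble.continuousAt.sub
      continuousAt_const).continuousWithinAt)
    (fun q hq x hx y hy hxy => sub_lt_sub_right
      ((strictMonoOn_slice hdiff hκ one_half_pos q.1 q.2.2).mono (hD q hq).1 hx hy hxy) _)
    (fun q hq => sub_neg.2 (hD q hq).2.1) (fun q hq => sub_pos.2 (hD q hq).2.2)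
    (fun q hq s hs => (hcont.continuousAt_comp_assemble
      (hslice q hq s (Ioo_subset_Icc_self hs))).sub continuous_snd.fst.continuousAt)
  exact ⟨min δ (1 / 8), lt_min hδ (by norm_num), v, fun q hq =>
    ⟨hslice q hq _ (Ioo_subset_Icc_self (hv q hq).1), sub_eq_zero.1 (hv q hq).2⟩, hvc⟩

end Hodograph

/-- existence, uniqueness and continuity of the hodograph transform `v` in the
`xₙ`-variable of a continuous function with `∂ₙu ≥ 1 - 1/M` and `u(0,0) = 0`. -/
theorem stmt10 (n : ℕ) (hn : 1 ≤ n) (M : ℝ) (hM : 2 ≤ M)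
    (u : Spc n × ℝ → ℝ) (hcont : ContinuousOn u (Qcyl n 1 0 0))
    (hdiff : ∀ p ∈ Qcyl n 1 0 0, HasGradientAt (fun y => u (y, p.2)) (spGrad u p) p.1)
    (hlast : ∀ p ∈ Qcyl n 1 0 0, 1 - 1 / M ≤ spGrad u p ⟨n - 1, by omega⟩)
    (h0 : u (0, 0) = 0) :
    ∃ δ > 0, ∃ v : EuclideanSpace ℝ (Fin (n - 1)) × ℝ × ℝ → ℝ,
      (∀ q : EuclideanSpace ℝ (Fin (n - 1)) × ℝ × ℝ,
        ‖q.1‖ + |q.2.1| + Real.sqrt |q.2.2| < δ →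
        (assemble n q.1 (v q), q.2.2) ∈ Qcyl n 1 0 0 ∧
        u (assemble n q.1 (v q), q.2.2) = q.2.1) ∧
      ContinuousOn v {q : EuclideanSpace ℝ (Fin (n - 1)) × ℝ × ℝ |
        ‖q.1‖ + |q.2.1| + Real.sqrt |q.2.2| < δ} ∧
      ∀ w : EuclideanSpace ℝ (Fin (n - 1)) × ℝ × ℝ → ℝ,
        (∀ q : EuclideanSpace ℝ (Fin (n - 1)) × ℝ × ℝ,
          ‖q.1‖ + |q.2.1| + Real.sqrt |q.2.2| < δ →
          (assemble n q.1 (w q), q.2.2) ∈ Qcyl n 1 0 0 ∧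
          u (assemble n q.1 (w q), q.2.2) = q.2.1) →
        ∀ q : EuclideanSpace ℝ (Fin (n - 1)) × ℝ × ℝ,
          ‖q.1‖ + |q.2.1| + Real.sqrt |q.2.2| < δ → w q = v q := by
  obtain ⟨m, rfl⟩ : ∃ m, n = m + 1 := ⟨n - 1, by omega⟩
  have hκ : ∀ p ∈ Qcyl (m + 1) 1 0 0, 1 / 2 ≤ spGrad u p (Fin.last m) := fun p hp =>
    calc (1 / 2 : ℝ) ≤ 1 - 1 / M := by linarith [one_div_le_one_div_of_le two_pos hM]
      _ ≤ spGrad u p (Fin.last m) := hlast p hp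
  obtain ⟨δ, hδ, v, hv, hvc⟩ := exists_continuousOn_hodograph hcont hdiff hκ h0
  refine ⟨δ, hδ, v, hv, hvc, fun w hw q hq => ?_⟩
  exact (strictMonoOn_slice hdiff hκ one_half_pos q.1 q.2.2).injOn (hw q hq).1 (hv q hq).1
    ((hw q hq).2.trans (hv q hq).2.symm)
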